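/- arXiv:1304.6825 — 2 statements merged into one kernel-verified Lean document; each statement's English description precedes it below -/
import Mathlib

section
/- Assume S ≠ 0 and let ω ∈ ℝ. The weighted Jacobi relaxation operator S_h^J, defined on functions u : ℤ → ℂ by S_h^J u = u − ω·(h/(2S))·(A_h^C u), satisfies for every θ ∈ ℝ: S_h^J φ_θ = S̃_h^J(θ) · φ_θ, where the smoother symbol is S̃_h^J(θ) = 1 − (ω/S)(iγ·cos(2θ) + R·cos(θ) + S). -/
/-! Fourier modes are characters of `ℤ`, so a symmetric stencil acts on `φ_θ` by multiplication
with a cosine polynomial in `θ`; the Jacobi symbol is then pure algebra, `h` and `2S`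
cancelling against the scaling of the stencil. -/

noncomputable def fourierMode (θ : ℝ) : ℤ → ℂ := fun j => Complex.exp (Complex.I * θ * j)

open Complex

theorem fourierMode_add (θ : ℝ) (j k : ℤ) :
    fourierMode θ (j + k) = fourierMode θ j * fourierMode θ k := by
  simp only [fourierMode, ← exp_add]
  push_cast
  ring_nf

theorem fourierMode_sub_add_fourierMode_add (θ : ℝ) (j k : ℤ) :
    fourierMode θ (j - k) + fourierMode θ (j + k) = 2 * cos (k * θ) * fourierMode θ j := by
  rw [sub_eq_add_neg, fourierMode_add, fourierMode_add, two_cos]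
  simp only [fourierMode]
  push_cast
  ring_nf

theorem symmetric_stencil_fourierMode (a b c : ℂ) (θ : ℝ) (j : ℤ) :
    a * fourierMode θ (j - 2) + b * fourierMode θ (j - 1) + c * fourierMode θ j
        + b * fourierMode θ (j + 1) + a * fourierMode θ (j + 2)
      = (2 * a * cos (2 * θ) + 2 * b * cos θ + c) * fourierMode θ j := by
  have pair₁ := fourierMode_sub_add_fourierMode_add θ j 1
  have pair₂ := fourierMode_sub_add_fourierMode_add θ j 2
  push_cast [one_mul] at pair₁ pair₂
  linear_combination b * pair₁ + a * pair₂

theorem jacobi_smoother_symbol_general (h : ℝ) (hh : 0 < h) (γ R S : ℂ)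
    (hS0 : S ≠ 0) (ω : ℝ) (θ : ℝ) (j : ℤ) :
    fourierMode θ j - (ω : ℂ) * ((h : ℂ) / (2 * S)) *
      ((1 / (h : ℂ)) * (Complex.I * γ * fourierMode θ (j - 2) + R * fourierMode θ (j - 1)
        + 2 * S * fourierMode θ j + R * fourierMode θ (j + 1)
        + Complex.I * γ * fourierMode θ (j + 2)))
      = (1 - (ω : ℂ) / S * (Complex.I * γ * Complex.cos (2 * θ)
          + R * Complex.cos θ + S)) * fourierMode θ j := by
  rw [symmetric_stencil_fourierMode]
  have hh0 : (h : ℂ) ≠ 0 := by exact_mod_cast hh.ne'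
  field_simp

/-- The weighted Jacobi relaxation `S_h^J u = u − ω (h/(2S)) A_h^C u` for the CIP-P1
operator satisfies `S_h^J φ_θ = S̃_h^J(θ) φ_θ` with smoother symbol
`S̃_h^J(θ) = 1 − (ω/S)(iγ cos 2θ + R cos θ + S)`. -/
theorem jacobi_smoother_symbol (h κ : ℝ) (hh : 0 < h) (hκ : 0 < κ)
    (t : ℝ) (ht : t = κ * h) (γ R S : ℂ)
    (hR : R = -1 - 4 * Complex.I * γ - (t : ℂ) ^ 2 / 6)
    (hS : S = 1 + 3 * Complex.I * γ - (t : ℂ) ^ 2 / 3)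
    (hS0 : S ≠ 0) (ω : ℝ) (θ : ℝ) (j : ℤ) :
    fourierMode θ j - (ω : ℂ) * ((h : ℂ) / (2 * S)) *
      ((1 / (h : ℂ)) * (Complex.I * γ * fourierMode θ (j - 2) + R * fourierMode θ (j - 1)
        + 2 * S * fourierMode θ j + R * fourierMode θ (j + 1)
        + Complex.I * γ * fourierMode θ (j + 2)))
      = (1 - (ω : ℂ) / S * (Complex.I * γ * Complex.cos (2 * θ)
          + R * Complex.cos θ + S)) * fourierMode θ j :=
  jacobi_smoother_symbol_general h hh γ R S hS0 ω θ j
end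

section
/- Consider the multilevel iteration (one sweep of the V-cycle with pre- and post-corrections on every level): given v₀ ∈ V and F = A_L u for some u ∈ V, define v_{l+1} = v_l + μ_l · ι_l(R_l(Q_l(F − A_L v_l))) for l = 0, 1, …, L, and then v_{2L+2−l} = v_{2L+1−l} + μ_l · ι_l(S_l(Q_l(F − A_L v_{2L+1−l}))) for l = L, L−1, …, 0. Then the error of the full sweep is propagated by the product operator: v_{2L+2} − u = (I − T̂_0)(I − T̂_1)⋯(I − T̂_L) · (I − T_L)⋯(I − T_1)(I − T_0) · (v_0 − u), where T_l := μ_l · ι_l ∘ R_l ∘ A_l ∘ P_l and T̂_l := μ_l · ι_l ∘ S_l ∘ A_l ∘ P_l are linear operators on V and I is the identity on V. -/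
/-!
Since `F = A_L u`, a correction step `v' = v + μ ι R Q (F − A_L v)` changes the error by
`v' − u = (I − μ ι R Q A_L)(v − u)`, and the Galerkin identity `Q_l A_L = A_l P_l` (both sides
have the same inner products with every `w ∈ V_l`) turns `μ ι R Q A_L` into `T_l`. The error of
the sweep is then the ordered product of the `2L + 2` one-step error operators.
-/

open scoped InnerProductSpace

section Galerkin

variable {𝕜 E : Type*} [RCLike 𝕜] [NormedAddCommGroup E] [InnerProductSpace 𝕜 E]

theorem Submodule.comp_eq_comp_of_inner {K : Submodule 𝕜 E} {Q P : E →ₗ[𝕜] K}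
    {A : K →ₗ[𝕜] K} {B : E →ₗ[𝕜] E} (hQ : ∀ x (y : K), ⟪(Q x : E), y⟫_𝕜 = ⟪x, y⟫_𝕜)
    (hAP : ∀ x (y : K), ⟪A (P x), y⟫_𝕜 = ⟪B x, (y : E)⟫_𝕜) :
    Q ∘ₗ B = A ∘ₗ P := by
  refine LinearMap.ext fun x => ext_inner_right 𝕜 fun y => ?_
  rw [LinearMap.comp_apply, LinearMap.comp_apply, Submodule.coe_inner, hQ, hAP]

end Galerkin

theorem error_eq_of_residual_correction {R M : Type*} [Ring R] [AddCommGroup M] [Module R M]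
    (C B : M →ₗ[R] M) {u v v' : M} (h : v' = v + C (B u - B v)) :
    v' - u = (1 - C ∘ₗ B) (v - u) := by
  rw [h, LinearMap.sub_apply, Module.End.one_apply, LinearMap.comp_apply, map_sub, map_sub,
    map_sub]
  abel

section OrderedProduct

variable {M α : Type*} [Monoid M] [MulAction M α]

theorem eq_prod_reverse_ofFn_smul_of_succ {n : ℕ} (f : Fin n → M) (e : ℕ → α)
    (h : ∀ i : Fin n, e (i + 1) = f i • e i) : e n = (List.ofFn f).reverse.prod • e 0 := by
  induction n with
  | zero => simp
  | succ n ih =>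
    rw [List.ofFn_succ', List.concat_eq_append, List.reverse_append, List.reverse_singleton,
      List.singleton_append, List.prod_cons, mul_smul,
      ← ih (fun i => f i.castSucc) fun i => h i.castSucc]
    exact h (Fin.last n)

theorem eq_prod_ofFn_smul_of_succ {n : ℕ} (f : Fin n → M) (e : ℕ → α)
    (h : ∀ i : Fin n, e (i + 1) = f i.rev • e i) : e n = (List.ofFn f).prod • e 0 := by
  induction n with
  | zero => simp
  | succ n ih =>
    rw [List.ofFn_succ, List.prod_cons, mul_smul,
      ← ih (fun i => f i.succ) fun i => by simpa [Fin.rev_castSucc] using h i.castSucc]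
    simpa using h (Fin.last n)

end OrderedProduct

theorem multilevel_error_propagation_general {V : Type*} [NormedAddCommGroup V]
    [InnerProductSpace ℂ V]
    (L : ℕ) (Vl : Fin (L + 1) → Submodule ℂ V)
    (a : ∀ l : Fin (L + 1), Vl l → Vl l → ℂ) (aL : V → V → ℂ)
    (A : ∀ l : Fin (L + 1), Vl l →ₗ[ℂ] Vl l) (AL : V →ₗ[ℂ] V)
    (Q P : ∀ l : Fin (L + 1), V →ₗ[ℂ] Vl l)
    (R S : ∀ l : Fin (L + 1), Vl l →ₗ[ℂ] Vl l)
    (μ : Fin (L + 1) → ℂ)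
    (hA : ∀ (l : Fin (L + 1)) (x y : Vl l), (inner ℂ ((A l) x) y : ℂ) = a l x y)
    (hAL : ∀ x y : V, (inner ℂ (AL x) y : ℂ) = aL x y)
    (hQ : ∀ (l : Fin (L + 1)) (x : V) (y : Vl l),
      (inner ℂ (((Q l) x : Vl l) : V) (y : V) : ℂ) = inner ℂ x (y : V))
    (hP : ∀ (l : Fin (L + 1)) (x : V) (y : Vl l), a l ((P l) x) y = aL x y)
    (u F : V) (hF : AL u = F)
    (v : ℕ → V)
    (hpre : ∀ l : Fin (L + 1), v ((l : ℕ) + 1)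
      = v (l : ℕ) + μ l • ((Vl l).subtype ((R l) ((Q l) (F - AL (v (l : ℕ)))))))
    (hpost : ∀ l : Fin (L + 1), v (2 * L + 2 - (l : ℕ))
      = v (2 * L + 1 - (l : ℕ))
        + μ l • ((Vl l).subtype ((S l) ((Q l) (F - AL (v (2 * L + 1 - (l : ℕ))))))))
    (T Th : Fin (L + 1) → Module.End ℂ V)
    (hT : ∀ l : Fin (L + 1), T l = μ l • ((Vl l).subtype ∘ₗ (R l) ∘ₗ (A l) ∘ₗ (P l)))
    (hTh : ∀ l : Fin (L + 1), Th l = μ l • ((Vl l).subtype ∘ₗ (S l) ∘ₗ (A l) ∘ₗ (P l))) :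
    v (2 * L + 2) - u
      = ((List.ofFn (fun l : Fin (L + 1) => (1 : Module.End ℂ V) - Th l)).prod
          * (List.ofFn (fun l : Fin (L + 1) => (1 : Module.End ℂ V) - T l)).reverse.prod)
          (v 0 - u) := by
  subst hF
  have hQA (l : Fin (L + 1)) : Q l ∘ₗ AL = A l ∘ₗ P l :=
    Submodule.comp_eq_comp_of_inner (hQ l) fun x y =>
      (hA l _ y).trans ((hP l x y).trans (hAL x y).symm)
  have hcorr (l : Fin (L + 1)) (W : Vl l →ₗ[ℂ] Vl l) :
      μ l • ((Vl l).subtype ∘ₗ W ∘ₗ A l ∘ₗ P l) = (μ l • (Vl l).subtype ∘ₗ W ∘ₗ Q l) ∘ₗ AL := by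
    rw [LinearMap.smul_comp, LinearMap.comp_assoc, LinearMap.comp_assoc, hQA]
  have hmid : v (L + 1) - u = (List.ofFn fun l => 1 - T l).reverse.prod • (v 0 - u) :=
    eq_prod_reverse_ofFn_smul_of_succ _ (fun k => v k - u) fun l => by
      rw [hT, hcorr]
      exact error_eq_of_residual_correction _ _ (hpre l)
  have hend : v (L + 1 + (L + 1)) - u
      = (List.ofFn fun l => 1 - Th l).prod • (v (L + 1) - u) :=
    eq_prod_ofFn_smul_of_succ _ (fun k => v (L + 1 + k) - u) fun l => by
      have hl : (l.rev : ℕ) = L - l := by rw [Fin.val_rev]; omega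
      have hstep := error_eq_of_residual_correction
        (μ l.rev • (Vl l.rev).subtype ∘ₗ S l.rev ∘ₗ Q l.rev) AL (hpost l.rev)
      rwa [hl, show 2 * L + 2 - (L - l) = L + 1 + (l + 1) by omega,
        show 2 * L + 1 - (L - l) = L + 1 + l by omega, ← hcorr, ← hTh] at hstep
  rw [show 2 * L + 2 = L + 1 + (L + 1) by omega, hend, hmid, Module.End.mul_apply,
    Module.End.smul_def, Module.End.smul_def]

/-- One sweep of the multilevel V-cycle with pre-corrections on levels `0,…,L` and
post-corrections on levels `L,…,0`: the error is propagated by the product operator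
`(I − T̂_0)(I − T̂_1)⋯(I − T̂_L)(I − T_L)⋯(I − T_1)(I − T_0)`, where
`T_l = μ_l ι_l ∘ R_l ∘ A_l ∘ P_l` and `T̂_l = μ_l ι_l ∘ S_l ∘ A_l ∘ P_l`. -/
theorem multilevel_error_propagation {V : Type*} [NormedAddCommGroup V]
    [InnerProductSpace ℂ V] [FiniteDimensional ℂ V]
    (L : ℕ) (Vl : Fin (L + 1) → Submodule ℂ V)
    (hmono : Monotone Vl) (htop : Vl (Fin.last L) = ⊤)
    (a : ∀ l : Fin (L + 1), Vl l → Vl l → ℂ) (aL : V → V → ℂ)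
    (A : ∀ l : Fin (L + 1), Vl l →ₗ[ℂ] Vl l) (AL : V →ₗ[ℂ] V)
    (Q P : ∀ l : Fin (L + 1), V →ₗ[ℂ] Vl l)
    (R S : ∀ l : Fin (L + 1), Vl l →ₗ[ℂ] Vl l)
    (μ : Fin (L + 1) → ℂ)
    (hA : ∀ (l : Fin (L + 1)) (x y : Vl l), (inner ℂ ((A l) x) y : ℂ) = a l x y)
    (hAL : ∀ x y : V, (inner ℂ (AL x) y : ℂ) = aL x y)
    (hQ : ∀ (l : Fin (L + 1)) (x : V) (y : Vl l),
      (inner ℂ (((Q l) x : Vl l) : V) (y : V) : ℂ) = inner ℂ x (y : V))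
    (hP : ∀ (l : Fin (L + 1)) (x : V) (y : Vl l), a l ((P l) x) y = aL x y)
    (u F : V) (hF : AL u = F)
    (v : ℕ → V)
    (hpre : ∀ l : Fin (L + 1), v ((l : ℕ) + 1)
      = v (l : ℕ) + μ l • ((Vl l).subtype ((R l) ((Q l) (F - AL (v (l : ℕ)))))))
    (hpost : ∀ l : Fin (L + 1), v (2 * L + 2 - (l : ℕ))
      = v (2 * L + 1 - (l : ℕ))
        + μ l • ((Vl l).subtype ((S l) ((Q l) (F - AL (v (2 * L + 1 - (l : ℕ))))))))
    (T Th : Fin (L + 1) → Module.End ℂ V)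
    (hT : ∀ l : Fin (L + 1), T l = μ l • ((Vl l).subtype ∘ₗ (R l) ∘ₗ (A l) ∘ₗ (P l)))
    (hTh : ∀ l : Fin (L + 1), Th l = μ l • ((Vl l).subtype ∘ₗ (S l) ∘ₗ (A l) ∘ₗ (P l))) :
    v (2 * L + 2) - u
      = ((List.ofFn (fun l : Fin (L + 1) => (1 : Module.End ℂ V) - Th l)).prod
          * (List.ofFn (fun l : Fin (L + 1) => (1 : Module.End ℂ V) - T l)).reverse.prod)
          (v 0 - u) :=
  multilevel_error_propagation_general L Vl a aL A AL Q P R S μ hA hAL hQ hP u F hF v hpre hpost T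
    Th hT hTh
end
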